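/- Let C be a nonempty closed convex subset of a strictly convex Banach space and T₁,…,T_N : C → C nonexpansive with ⋂_{i=1}^N F(T_i) ≠ ∅. Let 0 < λ_i < 1 for i = 1,…,N−1 and 0 < λ_N ≤ 1, and let K be the K-mapping generated by T₁,…,T_N and λ₁,…,λ_N, defined by U₁ = λ₁T₁ + (1−λ₁)I and U_k = λ_k T_k U_{k−1} + (1−λ_k)U_{k−1} for k = 2,…,N, K = U_N. Then F(K) = ⋂_{i=1}^N F(T_i). -/
import Mathlib


open Filter

/-- `Kaux T lam m` is `U_{m}` in the `K`-mapping construction of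
Kangtunyakarn and Suantai: `U₀ = id`, `U_k = λ_k T_k U_{k-1} + (1-λ_k) U_{k-1}`.
The `K`-mapping generated by `T₁,…,T_N` and `λ₁,…,λ_N` is `Kaux T lam N`. -/
def Kaux {X : Type*} [NormedAddCommGroup X] [NormedSpace ℝ X]
    (T : ℕ → X → X) (lam : ℕ → ℝ) : ℕ → X → X
  | 0 => id
  | (m + 1) => fun x =>
      lam (m + 1) • T (m + 1) (Kaux T lam m x) + (1 - lam (m + 1)) • Kaux T lam m x

theorem stmt_13 {X : Type*} [NormedAddCommGroup X] [NormedSpace ℝ X]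
    [StrictConvexSpace ℝ X] [CompleteSpace X]
    (C : Set X) (hCne : C.Nonempty) (hCcl : IsClosed C) (hCcv : Convex ℝ C)
    (N : ℕ) (hN : 1 ≤ N)
    (T : ℕ → X → X) (hTmaps : ∀ i, 1 ≤ i → i ≤ N → Set.MapsTo (T i) C C)
    (hTne : ∀ i, 1 ≤ i → i ≤ N → ∀ x ∈ C, ∀ y ∈ C, ‖T i x - T i y‖ ≤ ‖x - y‖)
    (hF : ∃ p ∈ C, ∀ i, 1 ≤ i → i ≤ N → T i p = p)
    (lam : ℕ → ℝ) (hlam : ∀ i, 1 ≤ i → i ≤ N - 1 → lam i ∈ Set.Ioo (0 : ℝ) 1)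
    (hlamN : lam N ∈ Set.Ioc (0 : ℝ) 1) :
    {x ∈ C | Kaux T lam N x = x} = {x ∈ C | ∀ i, 1 ≤ i → i ≤ N → T i x = x} := by
  obtain ⟨p, hpC, hp⟩ := hF
  have hlam01 : ∀ m, 1 ≤ m → m ≤ N → 0 < lam m ∧ lam m ≤ 1 := by
    intro m h1 h2
    rcases eq_or_lt_of_le h2 with rfl | h
    · exact ⟨hlamN.1, hlamN.2⟩
    · have := hlam m h1 (by omega)
      exact ⟨this.1, this.2.le⟩
  ext x
  simp only [Set.mem_setOf_eq]
  constructor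
  · rintro ⟨hxC, hKx⟩
    refine ⟨hxC, ?_⟩
    -- U_m x ∈ C
    have hC : ∀ m, m ≤ N → Kaux T lam m x ∈ C := by
      intro m
      induction m with
      | zero => intro _; exact hxC
      | succ k ih =>
        intro hk
        have hkC := ih (by omega)
        have h1 : T (k + 1) (Kaux T lam k x) ∈ C := hTmaps (k + 1) (by omega) hk hkC
        have hl := hlam01 (k + 1) (by omega) hk
        show lam (k + 1) • T (k + 1) (Kaux T lam k x)
            + (1 - lam (k + 1)) • Kaux T lam k x ∈ C
        exact hCcv h1 hkC hl.1.le (by linarith [hl.2]) (by ring)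
    -- nonexpansiveness toward p at each step
    have hTle : ∀ k, k + 1 ≤ N →
        ‖T (k + 1) (Kaux T lam k x) - p‖ ≤ ‖Kaux T lam k x - p‖ := by
      intro k hk
      have := hTne (k + 1) (by omega) hk (Kaux T lam k x) (hC k (by omega)) p hpC
      rwa [hp (k + 1) (by omega) hk] at this
    -- one-step monotonicity of distances to p
    have hmono : ∀ k, k + 1 ≤ N →
        ‖Kaux T lam (k + 1) x - p‖ ≤ ‖Kaux T lam k x - p‖ := by
      intro k hk
      have hl := hlam01 (k + 1) (by omega) hk
      have hdecomp : Kaux T lam (k + 1) x - p =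
          lam (k + 1) • (T (k + 1) (Kaux T lam k x) - p)
          + (1 - lam (k + 1)) • (Kaux T lam k x - p) := by
        show (lam (k + 1) • T (k + 1) (Kaux T lam k x)
            + (1 - lam (k + 1)) • Kaux T lam k x) - p = _
        module
      rw [hdecomp]
      have h1 := hTle k hk
      calc ‖lam (k + 1) • (T (k + 1) (Kaux T lam k x) - p)
              + (1 - lam (k + 1)) • (Kaux T lam k x - p)‖
          ≤ ‖lam (k + 1) • (T (k + 1) (Kaux T lam k x) - p)‖
            + ‖(1 - lam (k + 1)) • (Kaux T lam k x - p)‖ := norm_add_le _ _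
        _ = lam (k + 1) * ‖T (k + 1) (Kaux T lam k x) - p‖
            + (1 - lam (k + 1)) * ‖Kaux T lam k x - p‖ := by
            rw [norm_smul, norm_smul, Real.norm_eq_abs, Real.norm_eq_abs,
              abs_of_pos hl.1, abs_of_nonneg (by linarith [hl.2] : (0:ℝ) ≤ 1 - lam (k+1))]
        _ ≤ lam (k + 1) * ‖Kaux T lam k x - p‖
            + (1 - lam (k + 1)) * ‖Kaux T lam k x - p‖ := by
            have := hl.1.le
            nlinarith [h1]
        _ = ‖Kaux T lam k x - p‖ := by ring
    -- chain of inequalities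
    have hchain : ∀ k m, k + m ≤ N →
        ‖Kaux T lam (k + m) x - p‖ ≤ ‖Kaux T lam k x - p‖ := by
      intro k m
      induction m with
      | zero => intro _; simp
      | succ j ih =>
        intro h
        have h1 : k + (j + 1) = (k + j) + 1 := rfl
        calc ‖Kaux T lam (k + (j + 1)) x - p‖
            = ‖Kaux T lam ((k + j) + 1) x - p‖ := by rw [h1]
          _ ≤ ‖Kaux T lam (k + j) x - p‖ := hmono (k + j) (by omega)
          _ ≤ ‖Kaux T lam k x - p‖ := ih (by omega)
    -- all distances equal ‖x - p‖
    have heq : ∀ m, m ≤ N → ‖Kaux T lam m x - p‖ = ‖x - p‖ := by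
      intro m hm
      have h0 : Kaux T lam 0 x = x := rfl
      have hup : ‖Kaux T lam m x - p‖ ≤ ‖x - p‖ := by
        have := hchain 0 m (by omega)
        simpa [h0] using this
      have hdown : ‖x - p‖ ≤ ‖Kaux T lam m x - p‖ := by
        have := hchain m (N - m) (by omega)
        rw [Nat.add_sub_cancel' hm, hKx] at this
        exact this
      linarith
    -- strict convexity step, for k + 1 ≤ N - 1
    have hstep : ∀ k, k + 1 ≤ N - 1 →
        T (k + 1) (Kaux T lam k x) = Kaux T lam k x := by
      intro k hk
      by_contra hne
      have hl := hlam (k + 1) (by omega) hk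
      have ha : ‖T (k + 1) (Kaux T lam k x) - p‖ ≤ ‖x - p‖ := by
        calc ‖T (k + 1) (Kaux T lam k x) - p‖ ≤ ‖Kaux T lam k x - p‖ :=
              hTle k (by omega)
          _ = ‖x - p‖ := heq k (by omega)
      have hb : ‖Kaux T lam k x - p‖ ≤ ‖x - p‖ := le_of_eq (heq k (by omega))
      have hne' : T (k + 1) (Kaux T lam k x) - p ≠ Kaux T lam k x - p := by
        intro h; exact hne (by
          have := sub_left_injective h; exact this)
      have hlt := norm_combo_lt_of_ne (b := 1 - lam (k + 1)) ha hb hne' hl.1 (by linarith [hl.2]) (by ring)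
      have hdecomp : Kaux T lam (k + 1) x - p =
          lam (k + 1) • (T (k + 1) (Kaux T lam k x) - p)
          + (1 - lam (k + 1)) • (Kaux T lam k x - p) := by
        show (lam (k + 1) • T (k + 1) (Kaux T lam k x)
            + (1 - lam (k + 1)) • Kaux T lam k x) - p = _
        module
      have : ‖Kaux T lam (k + 1) x - p‖ = ‖x - p‖ := heq (k + 1) (by omega)
      rw [hdecomp] at this
      linarith
    -- U_m x = x for m ≤ N - 1
    have hUx : ∀ m, m ≤ N - 1 → Kaux T lam m x = x := by
      intro m
      induction m with
      | zero => intro _; rfl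
      | succ k ih =>
        intro hk
        have hk' := ih (by omega)
        show lam (k + 1) • T (k + 1) (Kaux T lam k x)
            + (1 - lam (k + 1)) • Kaux T lam k x = x
        rw [hstep k hk, hk', ← add_smul]
        norm_num
    intro i h1 h2
    obtain ⟨k, rfl⟩ : ∃ k, i = k + 1 := ⟨i - 1, by omega⟩
    rcases (by omega : k + 1 ≤ N - 1 ∨ k + 1 = N) with hle | hNeq
    · have := hstep k hle
      rwa [hUx k (by omega)] at this
    · -- last step: use λ_N > 0
      have hU : Kaux T lam (N - 1) x = x := hUx (N - 1) le_rfl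
      have hN1 : N = (N - 1) + 1 := by omega
      have hKN : lam N • T N (Kaux T lam (N - 1) x)
          + (1 - lam N) • Kaux T lam (N - 1) x = x := by
        conv_rhs => rw [← hKx]
        rw [hN1]
        rfl
      rw [hU] at hKN
      have h2' : lam N • T N x = lam N • x := by
        have hx1 : (1 - lam N) • x = x - lam N • x := by
          rw [sub_smul, one_smul]
        rw [hx1] at hKN
        calc lam N • T N x = (lam N • T N x + (x - lam N • x)) - (x - lam N • x) := by abel
          _ = x - (x - lam N • x) := by rw [hKN]
          _ = lam N • x := by abel
      have := smul_right_injective X (ne_of_gt hlamN.1) h2'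
      rw [hNeq]
      exact this
  · rintro ⟨hxC, hfix⟩
    refine ⟨hxC, ?_⟩
    have key : ∀ m, m ≤ N → Kaux T lam m x = x := by
      intro m
      induction m with
      | zero => intro _; rfl
      | succ k ih =>
        intro hk
        have hk' := ih (by omega)
        show lam (k + 1) • T (k + 1) (Kaux T lam k x)
            + (1 - lam (k + 1)) • Kaux T lam k x = x
        rw [hk', hfix (k + 1) (by omega) hk, ← add_smul]
        norm_num
    exact key N le_rfl
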